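/- Let a and b be words in {↑,↓} of lengths k and l, set K = k + l, and let S : V(a↑↑b) → V(a↑↑b) be the k-linear map given on basis vectors by S(v_i) = v_{i∘(k+1 k+2)}, where i∘(k+1 k+2) is i with the entries in positions k+1 and k+2 interchanged. Let p be a positive integer such that the p-th letter of the word a↓↓b is ↑. Then, writing (p,q)_λ for (p,q)^{a↑↑b}_λ: (i) S ∘ (p,q)_λ = (p,q)_λ ∘ S whenever q ≠ p and either q ≤ k or k+2 < q ≤ K+2; (ii) S ∘ (p,k+1)_λ = (p,k+2)_λ ∘ S; (iii) S ∘ (p,k+2)_λ = (p,k+1)_λ ∘ S; (iv) S ∘ (k+1,q)_λ = (k+2,q)_λ ∘ S whenever q ≤ k or k+2 < q ≤ K+2; (v) (k+2,k+1)_λ ∘ S = S ∘ (k+1,k+2)_λ + 1_{V(a↑↑b)}. -/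

import Mathlib

open Finset

/-- The set of boxes of the pyramid associated to `lam` (`Box.1` is the column, 0-based). -/
abbrev Box {ℓ : ℕ} (lam : Fin ℓ → ℕ) : Type := (j : Fin ℓ) × Fin (lam j)

/-- A sequence is unimodular: it weakly increases up to some index `κ` and weakly
decreases afterwards. -/
def Unimodular {ℓ : ℕ} (lam : Fin ℓ → ℕ) : Prop :=
  ∃ κ : Fin ℓ, (∀ i j : Fin ℓ, i ≤ j → j ≤ κ → lam i ≤ lam j) ∧
    (∀ i j : Fin ℓ, κ ≤ i → i ≤ j → lam j ≤ lam i)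

/-- The free `k`-module `V(a)` with basis indexed by `K`-tuples of boxes. -/
abbrev V (k : Type*) [CommRing k] {ℓ : ℕ} (lam : Fin ℓ → ℕ) (K : ℕ) : Type _ :=
  (Fin K → Box lam) →₀ k

/-- The modified transposition `(p,q)^a_λ` (positions are 0-based elements of `Fin K`;
the letter `↑` is `true` and `↓` is `false`). -/
noncomputable def modT (k : Type*) [CommRing k] {ℓ K : ℕ} (lam : Fin ℓ → ℕ)
    (a : Fin K → Bool) (p q : Fin K) : Module.End k (V k lam K) :=
  Finsupp.lift (V k lam K) k (Fin K → Box lam) (fun j =>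
    if a q then
      if q < p then
        (if (j p).1 ≤ (j q).1 then Finsupp.single (j ∘ Equiv.swap p q) (1 : k) else 0)
      else
        (if (j q).1 < (j p).1 then -Finsupp.single (j ∘ Equiv.swap p q) (1 : k) else 0)
    else
      if q < p then
        (if j p = j q then
          -∑ c ∈ univ.filter (fun c : Box lam => (j p).1 ≤ c.1),
            Finsupp.single (Function.update (Function.update j p c) q c) (1 : k)
        else 0)
      else
        (if j p = j q then
          ∑ c ∈ univ.filter (fun c : Box lam => c.1 < (j p).1),
            Finsupp.single (Function.update (Function.update j p c) q c) (1 : k)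
        else 0))
/-- The concatenation `ab` of two words. -/
def catW {kk ll : ℕ} (a : Fin kk → Bool) (b : Fin ll → Bool) : Fin (kk + ll) → Bool :=
  fun t => if h : t.val < kk then a ⟨t.val, h⟩ else b ⟨t.val - kk, by have := t.isLt; omega⟩

/-- The word `a x y b` obtained by inserting the two letters `x, y` between `a` and `b`. -/
def insW {kk ll : ℕ} (a : Fin kk → Bool) (x y : Bool) (b : Fin ll → Bool) :
    Fin (kk + ll + 2) → Bool :=
  fun t =>
    if h : t.val < kk then a ⟨t.val, h⟩
    else if h2 : t.val = kk then x
    else if h3 : t.val = kk + 1 then y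
    else b ⟨t.val - (kk + 2), by have := t.isLt; omega⟩

/-- `i⟨c⟩`: insert the box `c` in positions `k+1` and `k+2` of the tuple `i`. -/
def insB {ℓ : ℕ} {lam : Fin ℓ → ℕ} {kk ll : ℕ} (i : Fin (kk + ll) → Box lam) (c : Box lam) :
    Fin (kk + ll + 2) → Box lam :=
  fun t =>
    if h : t.val < kk then i ⟨t.val, by omega⟩
    else if h2 : t.val < kk + 2 then c
    else i ⟨t.val - 2, by have := t.isLt; omega⟩

/-- The map `S : V(a↑↑b) → V(a↑↑b)` interchanging the entries in positions
`k+1` and `k+2` of each basis tuple. -/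
noncomputable def Smap (k : Type*) [CommRing k] {ℓ : ℕ} (lam : Fin ℓ → ℕ) (kk ll : ℕ) :
    Module.End k (V k lam (kk + ll + 2)) :=
  Finsupp.lift (V k lam (kk + ll + 2)) k (Fin (kk + ll + 2) → Box lam)
    (fun i =>
      Finsupp.single (i ∘ Equiv.swap ⟨kk, by omega⟩ ⟨kk + 1, by omega⟩) (1 : k))

/-!
`S` is the relabelling `v_j ↦ v_{j ∘ σ}` of basis tuples by the transposition `σ` of the
positions `k+1, k+2`. Relabelling by any permutation `σ` conjugates `(σ p, σ q)_λ` into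
`(p, q)_λ` as long as the letter at the second position and the relative order of the two
positions are preserved, since the defining conditions only read the entries at those positions;
(i)–(iv) are instances of this. For (v), on a basis vector `v_j` exactly one of
`col(j_{k+1}) ≤ col(j_{k+2})` and `col(j_{k+2}) < col(j_{k+1})` holds, and in either case both
sides equal `v_j` or `0`.
-/

lemma lift_apply_single_one {R X M : Type*} [CommRing R] [AddCommGroup M] [Module R M]
    (f : X → M) (x : X) : Finsupp.lift M R X f (Finsupp.single x 1) = f x := by
  simp [Finsupp.lift_apply]

section Conjugation

variable (k : Type*) [CommRing k] {ℓ K : ℕ} (lam : Fin ℓ → ℕ)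

noncomputable def permuteEnd (σ : Equiv.Perm (Fin K)) : Module.End k (V k lam K) :=
  Finsupp.lmapDomain k k (· ∘ σ)

variable {k lam}

@[simp]
lemma permuteEnd_single (σ : Equiv.Perm (Fin K)) (j : Fin K → Box lam) (c : k) :
    permuteEnd k lam σ (Finsupp.single j c) = Finsupp.single (j ∘ σ) c := by
  simp [permuteEnd, Finsupp.lmapDomain_apply, Finsupp.mapDomain_single]

lemma permuteEnd_comp_modT (w : Fin K → Bool) (σ : Equiv.Perm (Fin K)) {p q p' q' : Fin K}
    (hp : σ p = p') (hq : σ q = q') (hw : w q' = w q) (hord : q' < p' ↔ q < p) :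
    permuteEnd k lam σ ∘ₗ modT k lam w p' q' = modT k lam w p q ∘ₗ permuteEnd k lam σ := by
  subst hp hq
  refine Finsupp.lhom_ext' fun j => LinearMap.ext_ring ?_
  have hswap : (j ∘ Equiv.swap (σ p) (σ q)) ∘ σ = (j ∘ σ) ∘ Equiv.swap p q := by
    funext t
    simp only [Function.comp_apply, Equiv.swap_apply_apply, Equiv.Perm.mul_apply,
      Equiv.Perm.inv_def, Equiv.symm_apply_apply]
  have hupdate : ∀ c : Box lam, Function.update (Function.update j (σ p) c) (σ q) c ∘ σ =
      Function.update (Function.update (j ∘ σ) p c) q c := by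
    intro c
    rw [Function.update_comp_equiv, Function.update_comp_equiv]
    simp
  simp only [LinearMap.comp_apply, Finsupp.lsingle_apply, permuteEnd_single, modT,
    lift_apply_single_one, Function.comp_apply, hw, hord]
  split_ifs <;> simp [map_sum, hswap, hupdate]

lemma modT_comp_permuteEnd_swap (w : Fin K → Bool) {u v : Fin K} (huv : u < v)
    (hu : w u = true) (hv : w v = true) :
    modT k lam w v u ∘ₗ permuteEnd k lam (Equiv.swap u v) =
      permuteEnd k lam (Equiv.swap u v) ∘ₗ modT k lam w u v + LinearMap.id := by
  refine Finsupp.lhom_ext' fun j => LinearMap.ext_ring ?_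
  have hinv : (j ∘ Equiv.swap u v) ∘ Equiv.swap u v = j := by
    funext t
    simp
  simp only [LinearMap.comp_apply, LinearMap.add_apply, LinearMap.id_apply,
    Finsupp.lsingle_apply, permuteEnd_single, modT, lift_apply_single_one, Function.comp_apply,
    hu, hv, huv, not_lt_of_gt huv, if_true, if_false, Equiv.swap_apply_left,
    Equiv.swap_apply_right, Equiv.swap_comm v u, hinv]
  by_cases hcol : (j v).1 < (j u).1
  · simp [hcol, not_le_of_gt hcol, hinv]
  · simp [hcol, le_of_not_gt hcol]

end Conjugation

lemma Smap_eq_permuteEnd (k : Type*) [CommRing k] {ℓ : ℕ} (lam : Fin ℓ → ℕ) (kk ll : ℕ) :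
    Smap k lam kk ll = permuteEnd k lam (Equiv.swap ⟨kk, by omega⟩ ⟨kk + 1, by omega⟩) := by
  refine Finsupp.lhom_ext' fun j => LinearMap.ext_ring ?_
  simp [Smap]

lemma insW_apply_of_val_eq_left {kk ll : ℕ} (a : Fin kk → Bool) (x y : Bool)
    (b : Fin ll → Bool) {t : Fin (kk + ll + 2)} (ht : t.val = kk) : insW a x y b t = x := by
  simp [insW, ht]

lemma insW_apply_of_val_eq_right {kk ll : ℕ} (a : Fin kk → Bool) (x y : Bool)
    (b : Fin ll → Bool) {t : Fin (kk + ll + 2)} (ht : t.val = kk + 1) :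
    insW a x y b t = y := by
  simp [insW, ht]

/-- Lemma 4.5: interaction of `S` with the modified transpositions of the word `a↑↑b`.
Positions `p, q` are 1-based as in the paper. -/
theorem Smap_modT
    (k : Type*) [CommRing k] {ℓ : ℕ}
    (lam : Fin ℓ → ℕ) (kk ll : ℕ)
    (a : Fin kk → Bool) (b : Fin ll → Bool)
    (p : ℕ) (hpK : p ≤ kk + ll + 2)
    (hup : insW a false false b ⟨p - 1, by omega⟩ = true) :
    -- (i)
    (∀ (q : ℕ) (hq1 : 1 ≤ q) (hqK : q ≤ kk + ll + 2)
        (hq : q ≤ kk ∨ kk + 2 < q) (hqp : q ≠ p),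
      (Smap k lam kk ll) ∘ₗ
          (modT k lam (insW a true true b) ⟨p - 1, by omega⟩ ⟨q - 1, by omega⟩) =
        (modT k lam (insW a true true b) ⟨p - 1, by omega⟩ ⟨q - 1, by omega⟩) ∘ₗ
          (Smap k lam kk ll)) ∧
    -- (ii)
    ((Smap k lam kk ll) ∘ₗ
        (modT k lam (insW a true true b) ⟨p - 1, by omega⟩ ⟨kk, by omega⟩) =
      (modT k lam (insW a true true b) ⟨p - 1, by omega⟩ ⟨kk + 1, by omega⟩) ∘ₗ
        (Smap k lam kk ll)) ∧
    -- (iii)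
    ((Smap k lam kk ll) ∘ₗ
        (modT k lam (insW a true true b) ⟨p - 1, by omega⟩ ⟨kk + 1, by omega⟩) =
      (modT k lam (insW a true true b) ⟨p - 1, by omega⟩ ⟨kk, by omega⟩) ∘ₗ
        (Smap k lam kk ll)) ∧
    -- (iv)
    (∀ (q : ℕ) (hq1 : 1 ≤ q) (hqK : q ≤ kk + ll + 2)
        (hq : q ≤ kk ∨ kk + 2 < q),
      (Smap k lam kk ll) ∘ₗ
          (modT k lam (insW a true true b) ⟨kk, by omega⟩ ⟨q - 1, by omega⟩) =
        (modT k lam (insW a true true b) ⟨kk + 1, by omega⟩ ⟨q - 1, by omega⟩) ∘ₗ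
          (Smap k lam kk ll)) ∧
    -- (v)
    ((modT k lam (insW a true true b) ⟨kk + 1, by omega⟩ ⟨kk, by omega⟩) ∘ₗ
        (Smap k lam kk ll) =
      (Smap k lam kk ll) ∘ₗ
          (modT k lam (insW a true true b) ⟨kk, by omega⟩ ⟨kk + 1, by omega⟩) +
        LinearMap.id) := by
  set u : Fin (kk + ll + 2) := ⟨kk, by omega⟩
  set v : Fin (kk + ll + 2) := ⟨kk + 1, by omega⟩
  have hu : insW a true true b u = true := insW_apply_of_val_eq_left a true true b rfl
  have hv : insW a true true b v = true := insW_apply_of_val_eq_right a true true b rfl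
  have hp : p - 1 < kk ∨ kk + 1 < p - 1 := by
    by_contra! hmid
    obtain hpu | hpv : p - 1 = kk ∨ p - 1 = kk + 1 := by omega
    · simp [insW_apply_of_val_eq_left a false false b (t := ⟨p - 1, _⟩) hpu] at hup
    · simp [insW_apply_of_val_eq_right a false false b (t := ⟨p - 1, _⟩) hpv] at hup
  have hfix : ∀ t : Fin (kk + ll + 2), t.val < kk ∨ kk + 1 < t.val → Equiv.swap u v t = t :=
    fun t ht => Equiv.swap_apply_of_ne_of_ne (by grind) (by grind)
  rw [Smap_eq_permuteEnd]
  refine ⟨fun q _ _ hq _ => ?_, ?_, ?_, fun q _ _ hq => ?_, ?_⟩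
  · exact permuteEnd_comp_modT _ _ (hfix _ hp) (hfix _ (by grind)) rfl Iff.rfl
  · exact permuteEnd_comp_modT _ _ (hfix _ hp) (Equiv.swap_apply_right u v) (hu.trans hv.symm)
      (by grind)
  · exact permuteEnd_comp_modT _ _ (hfix _ hp) (Equiv.swap_apply_left u v) (hv.trans hu.symm)
      (by grind)
  · exact permuteEnd_comp_modT _ _ (Equiv.swap_apply_right u v) (hfix _ (by grind)) rfl
      (by grind)
  · exact modT_comp_permuteEnd_swap _ (by grind) hu hv
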